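/- Let (Ω, 𝔉, P) be a probability space, X a nonempty set, c ∈ (0, 1], and for each x ∈ X let F(x) : Ω → ℝ be a square-integrable random variable. Define f(x) := E[F(x)], h(x) := f(x) + c·(E[(F(x) − f(x))₊²])^{1/2}, and φ(x, y, z) := (c/z)·E[(F(x) − y)₊²] + y + (c/4)·z. Fix ε > 0 and the feasible set S_ε := {(x, y, z) : x ∈ X, y ≥ f(x), z ≥ ε}. Suppose x* minimizes h over X and (x*_ε, y*_ε, z*_ε) minimizes φ over S_ε. Then for every (x̄, ȳ, z̄) ∈ S_ε one has h(x̄) − h(x*) < [φ(x̄, ȳ, z̄) − φ(x*_ε, y*_ε, z*_ε)] + (c/2)·ε. -/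

import Mathlib

/-!
Write `d(x, y) := ‖(F(x) − y)₊‖₂`, so that `h(x) = f(x) + c·d(x, f(x))` and
`φ(x, y, z) = (c/z)·d(x, y)² + y + (c/4)·z`. By AM-GM, `d ≤ d²/z + z/4` with equality at
`z = 2d`, and by Minkowski `d(x, f(x)) ≤ d(x, y) + (y − f(x))` for `y ≥ f(x)`; since `c ≤ 1`
this gives `h ≤ φ` on `S_ε`. Conversely, the point `(x, f(x), max(ε, 2d))` of `S_ε` has
`φ < h(x) + (c/2)·ε`, so `φ(x*_ε, y*_ε, z*_ε) < h(x) + (c/2)·ε` for every `x`.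
-/

open MeasureTheory ProbabilityTheory

lemma sqrt_le_div_add_div_four {a z : ℝ} (ha : 0 ≤ a) (hz : 0 < z) :
    √a ≤ a / z + z / 4 := by
  have key : z * √a ≤ a + z ^ 2 / 4 := by
    nlinarith [sq_nonneg (√a - z / 2), Real.sq_sqrt ha]
  rw [div_add_div _ _ hz.ne' four_ne_zero, le_div_iff₀ (by positivity)]
  nlinarith

lemma sq_div_max_add_max_div_four_lt {s ε : ℝ} (hs : 0 ≤ s) (hε : 0 < ε) :
    s ^ 2 / max ε (2 * s) + max ε (2 * s) / 4 < s + ε / 2 := by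
  rcases le_total ε (2 * s) with h | h
  · have hs0 : 0 < s := by linarith
    rw [max_eq_right h, pow_two, mul_div_mul_right _ _ hs0.ne']
    linarith
  · rw [max_eq_left h, div_add_div _ _ hε.ne' four_ne_zero, div_lt_iff₀ (by positivity)]
    nlinarith

section

variable {Ω : Type*} [MeasurableSpace Ω] {P : Measure Ω}

lemma integral_le_sqrt_integral_sq [IsProbabilityMeasure P] {g : Ω → ℝ} (hg : MemLp g 2 P) :
    ∫ ω, g ω ∂P ≤ √(∫ ω, g ω ^ 2 ∂P) := by
  have hvar := variance_nonneg g P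
  rw [variance_eq_sub hg] at hvar
  exact (le_abs_self _).trans (Real.abs_le_sqrt (by simpa using hvar))

lemma sqrt_integral_sq_le_add [IsProbabilityMeasure P] {u v : Ω → ℝ} (hv : MemLp v 2 P)
    {t : ℝ} (ht : 0 ≤ t) (hu : ∀ ω, 0 ≤ u ω) (huv : ∀ ω, u ω ≤ v ω + t) :
    √(∫ ω, u ω ^ 2 ∂P) ≤ √(∫ ω, v ω ^ 2 ∂P) + t := by
  have hv1 : Integrable v P := hv.integrable one_le_two
  have hv2 : Integrable (fun ω => v ω ^ 2) P := hv.integrable_sq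
  have hexpand : ∫ ω, (v ω + t) ^ 2 ∂P = ∫ ω, v ω ^ 2 ∂P + 2 * t * ∫ ω, v ω ∂P + t ^ 2 := by
    have hpt : ∀ ω, (v ω + t) ^ 2 = v ω ^ 2 + 2 * t * v ω + t ^ 2 := fun ω => by ring
    simp_rw [hpt]
    have hlin : Integrable (fun ω => v ω ^ 2 + 2 * t * v ω) P := hv2.add (hv1.const_mul _)
    rw [integral_add hlin (integrable_const _), integral_add hv2 (hv1.const_mul _),
      integral_const_mul]
    simp
  have hmono : ∫ ω, u ω ^ 2 ∂P ≤ ∫ ω, (v ω + t) ^ 2 ∂P :=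
    integral_mono_of_nonneg (.of_forall fun ω => sq_nonneg _)
      (hv.add (memLp_const t)).integrable_sq
      (.of_forall fun ω => pow_le_pow_left₀ (hu ω) (huv ω) 2)
  have hsq := Real.sq_sqrt (integral_nonneg (μ := P) fun ω => sq_nonneg (v ω))
  have hmean := integral_le_sqrt_integral_sq hv
  calc √(∫ ω, u ω ^ 2 ∂P) ≤ √((√(∫ ω, v ω ^ 2 ∂P) + t) ^ 2) := Real.sqrt_le_sqrt (by nlinarith [mul_le_mul_of_nonneg_left hmean ht])
    _ = √(∫ ω, v ω ^ 2 ∂P) + t := Real.sqrt_sq (by positivity)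

lemma sqrt_integral_posPart_sub_sq_le [IsProbabilityMeasure P] {g : Ω → ℝ} (hg : MemLp g 2 P)
    {a b : ℝ} (hab : a ≤ b) :
    √(∫ ω, max (g ω - a) 0 ^ 2 ∂P) ≤ √(∫ ω, max (g ω - b) 0 ^ 2 ∂P) + (b - a) :=
  sqrt_integral_sq_le_add (v := fun ω => max (g ω - b) 0) (hg.sub (memLp_const b)).pos_part (sub_nonneg.2 hab)
    (fun _ => le_max_right _ _) fun ω =>
      max_le (by linarith [le_max_left (g ω - b) 0]) (by linarith [le_max_right (g ω - b) 0])

lemma add_mul_sqrt_integral_posPart_sq_le [IsProbabilityMeasure P] {c : ℝ}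
    (hc : c ∈ Set.Ioc 0 1) {g : Ω → ℝ} (hg : MemLp g 2 P) {m y z : ℝ} (hmy : m ≤ y)
    (hz : 0 < z) :
    m + c * √(∫ ω, max (g ω - m) 0 ^ 2 ∂P) ≤
      c / z * ∫ ω, max (g ω - y) 0 ^ 2 ∂P + y + c / 4 * z := by
  set D := ∫ ω, max (g ω - y) 0 ^ 2 ∂P
  have hD : 0 ≤ D := integral_nonneg fun ω => sq_nonneg _
  have hcy : c * (y - m) ≤ y - m := mul_le_of_le_one_left (sub_nonneg.2 hmy) hc.2
  calc m + c * √(∫ ω, max (g ω - m) 0 ^ 2 ∂P) ≤ m + c * (√D + (y - m)) := by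
        gcongr
        · exact hc.1.le
        · exact sqrt_integral_posPart_sub_sq_le hg hmy
    _ ≤ m + c * (D / z + z / 4) + (y - m) := by
        nlinarith [mul_le_mul_of_nonneg_left (sqrt_le_div_add_div_four hD hz) hc.1.le]
    _ = c / z * D + y + c / 4 * z := by ring

end

theorem stmt_7_general {Ω X : Type*} [MeasurableSpace Ω]
    (P : Measure Ω) [IsProbabilityMeasure P]
    (c : ℝ) (hc : c ∈ Set.Ioc (0 : ℝ) 1)
    (F : X → Ω → ℝ) (hF : ∀ x, MemLp (F x) 2 P)
    (f h : X → ℝ) (φ : X → ℝ → ℝ → ℝ)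
    (hh : ∀ x, h x = f x + c * Real.sqrt (∫ ω, (max (F x ω - f x) 0) ^ 2 ∂P))
    (hφ : ∀ x y z, φ x y z = (c / z) * (∫ ω, (max (F x ω - y) 0) ^ 2 ∂P) + y + (c / 4) * z)
    (ε : ℝ) (hε : 0 < ε)
    (xs : X)
    (xe : X) (ye ze : ℝ)
    (hmin : ∀ x y z, f x ≤ y → ε ≤ z → φ xe ye ze ≤ φ x y z) :
    ∀ xb : X, ∀ yb zb : ℝ, f xb ≤ yb → ε ≤ zb →
      h xb - h xs < (φ xb yb zb - φ xe ye ze) + (c / 2) * ε := by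
  intro xb yb zb hyb hzb
  have h_le_φ : h xb ≤ φ xb yb zb := by
    rw [hh, hφ]
    exact add_mul_sqrt_integral_posPart_sq_le hc (hF xb) hyb (hε.trans_le hzb)
  have φ_lt_h : φ xe ye ze < h xs + c / 2 * ε := by
    set s := √(∫ ω, max (F xs ω - f xs) 0 ^ 2 ∂P)
    have hs : s ^ 2 = ∫ ω, max (F xs ω - f xs) 0 ^ 2 ∂P :=
      Real.sq_sqrt (integral_nonneg fun ω => sq_nonneg _)
    calc φ xe ye ze ≤ φ xs (f xs) (max ε (2 * s)) := hmin _ _ _ le_rfl (le_max_left _ _)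
      _ = f xs + c * (s ^ 2 / max ε (2 * s) + max ε (2 * s) / 4) := by rw [hφ, ← hs]; ring
      _ < f xs + c * (s + ε / 2) := (add_lt_add_iff_left _).2
        (mul_lt_mul_of_pos_left (sq_div_max_add_max_div_four_lt (Real.sqrt_nonneg _) hε) hc.1)
      _ = h xs + c / 2 * ε := by rw [hh]; ring
  linarith

/-- Optimality-gap bound via the truncated lifted problem: with `x*` a minimizer of `h`
over `X` and `(x*_ε, y*_ε, z*_ε)` a minimizer of `φ` over `S_ε`, every feasible
`(x̄, ȳ, z̄) ∈ S_ε` satisfies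
`h(x̄) − h(x*) < [φ(x̄, ȳ, z̄) − φ(x*_ε, y*_ε, z*_ε)] + (c/2)·ε`. -/
theorem stmt_7 {Ω X : Type*} [MeasurableSpace Ω] [Nonempty X]
    (P : Measure Ω) [IsProbabilityMeasure P]
    (c : ℝ) (hc : c ∈ Set.Ioc (0 : ℝ) 1)
    (F : X → Ω → ℝ) (hF : ∀ x, MemLp (F x) 2 P)
    (f h : X → ℝ) (φ : X → ℝ → ℝ → ℝ)
    (hf : ∀ x, f x = ∫ ω, F x ω ∂P)
    (hh : ∀ x, h x = f x + c * Real.sqrt (∫ ω, (max (F x ω - f x) 0) ^ 2 ∂P))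
    (hφ : ∀ x y z, φ x y z = (c / z) * (∫ ω, (max (F x ω - y) 0) ^ 2 ∂P) + y + (c / 4) * z)
    (ε : ℝ) (hε : 0 < ε)
    (xs : X) (hxs : ∀ x, h xs ≤ h x)
    (xe : X) (ye ze : ℝ) (hye : f xe ≤ ye) (hze : ε ≤ ze)
    (hmin : ∀ x y z, f x ≤ y → ε ≤ z → φ xe ye ze ≤ φ x y z) :
    ∀ xb : X, ∀ yb zb : ℝ, f xb ≤ yb → ε ≤ zb →
      h xb - h xs < (φ xb yb zb - φ xe ye ze) + (c / 2) * ε :=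
  stmt_7_general P c hc F hF f h φ hh hφ ε hε xs xe ye ze hmin
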